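/- arXiv:1806.01602 — 5 statements merged into one kernel-verified Lean document; each statement's English description precedes it below -/
import Mathlib

section
/- (Proposition 1: average linear gain of a nonlinear PA.) For every real P > 0, ∫_ℂ f(z) · conj(z) · ρ_P(z) dz = P · ḡ(P), where ḡ(P) = Σ_{m=0}^{M} β_{2m+1} (m+1)! P^m. Equivalently, the Bussgang linear gain E{f(u) u*} / E{|u|²} of the PA driven by a circularly symmetric complex Gaussian input u of variance P equals ḡ(P). -/
/-! Since `f(z) z̄ = Σ β_{2m+1} |z|^{2m+2}`, the claim reduces to the Gaussian moments
`E|u|^{2k} = k! Pᵏ`, which follow from the polar-coordinate formula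
`∫_ℂ |z|^q e^{-b|z|^p} dz = (2π/p) b^{-(q+2)/p} Γ((q+2)/p)`. -/

open MeasureTheory

/-- The memoryless polynomial PA model `f(z) = Σ_{m=0}^{M} β_{2m+1} |z|^{2m} z`,
where `β m` stands for the coefficient `β_{2m+1}`. -/
noncomputable def paModel (M : ℕ) (β : ℕ → ℂ) (z : ℂ) : ℂ :=
  ∑ m ∈ Finset.range (M + 1), β m * (‖z‖ : ℂ) ^ (2 * m) * z

/-- The average (Bussgang) linear gain `ḡ(P) = Σ_{m=0}^{M} β_{2m+1} (m+1)! Pᵐ`. -/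
noncomputable def avgGain (M : ℕ) (β : ℕ → ℂ) (P : ℝ) : ℂ :=
  ∑ m ∈ Finset.range (M + 1), β m * ((Nat.factorial (m + 1) : ℕ) : ℂ) * (P : ℂ) ^ m

open Real

theorem Complex.integral_norm_pow_mul_exp_neg_sq_div (k : ℕ) {P : ℝ} (hP : 0 < P) :
    ∫ z : ℂ, ‖z‖ ^ (2 * k) * Real.exp (-‖z‖ ^ 2 / P) = π * P ^ (k + 1) * k.factorial := by
  have h := Complex.integral_rpow_mul_exp_neg_mul_rpow (p := 2) (q := (2 * k : ℕ)) one_le_two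
    ((Nat.cast_nonneg _).trans_lt' (by norm_num)) (inv_pos.2 hP)
  have hscale : P⁻¹ ^ (-((2 * k : ℕ) + 2 : ℝ) / 2) = P ^ (k + 1) := by
    rw [Real.inv_rpow hP.le, ← Real.rpow_neg hP.le, ← Real.rpow_natCast]
    push_cast
    ring_nf
  have hgamma : Real.Gamma (((2 * k : ℕ) + 2 : ℝ) / 2) = k.factorial := by
    rw [← Real.Gamma_nat_eq_factorial]
    push_cast
    ring_nf
  simp_rw [Real.rpow_natCast, Real.rpow_two, neg_mul, inv_mul_eq_div, ← neg_div, hscale,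
    hgamma] at h
  rw [h]
  ring

theorem Complex.integrable_norm_pow_mul_exp_neg_sq_div (k : ℕ) {P : ℝ} (hP : 0 < P) :
    Integrable (fun z : ℂ => ‖z‖ ^ (2 * k) * Real.exp (-‖z‖ ^ 2 / P)) :=
  -- A non-integrable function would have integral `0`.
  .of_integral_ne_zero <| by
    rw [Complex.integral_norm_pow_mul_exp_neg_sq_div k hP]
    positivity

theorem Complex.integral_norm_pow_mul_gaussianDensity (k : ℕ) {P : ℝ} (hP : 0 < P) :
    ∫ z : ℂ, ‖z‖ ^ (2 * k) * ((π * P)⁻¹ * Real.exp (-‖z‖ ^ 2 / P)) = k.factorial * P ^ k := by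
  simp_rw [mul_left_comm _ (π * P)⁻¹, integral_const_mul,
    Complex.integral_norm_pow_mul_exp_neg_sq_div k hP]
  field_simp
  ring

theorem paModel_mul_star (M : ℕ) (β : ℕ → ℂ) (z : ℂ) :
    paModel M β z * star z =
      ∑ m ∈ Finset.range (M + 1), β m * ((‖z‖ ^ (2 * (m + 1)) : ℝ) : ℂ) := by
  have hz : z * star z = (‖z‖ : ℂ) ^ 2 := Complex.mul_conj' z
  rw [paModel, Finset.sum_mul]
  refine Finset.sum_congr rfl fun m _ => ?_
  rw [mul_assoc, hz]
  push_cast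
  ring

/-- Proposition 1: `E{f(u) u*} = P ḡ(P)` for a circularly symmetric complex Gaussian
input `u` with variance `P`, i.e. the Bussgang linear gain of the PA is `ḡ(P)`. -/
theorem avg_linear_gain (M : ℕ) (β : ℕ → ℂ) (P : ℝ) (hP : 0 < P) :
    ∫ z : ℂ, paModel M β z * star z *
        (((Real.pi * P)⁻¹ * Real.exp (-‖z‖ ^ 2 / P) : ℝ) : ℂ) =
      (P : ℂ) * avgGain M β P := by
  set ρ : ℂ → ℝ := fun z => (π * P)⁻¹ * Real.exp (-‖z‖ ^ 2 / P)
  have hintegrable (m : ℕ) : Integrable (fun z => β m * ((‖z‖ ^ (2 * (m + 1)) * ρ z : ℝ) : ℂ)) :=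
    (((Complex.integrable_norm_pow_mul_exp_neg_sq_div (m + 1) hP).const_mul (π * P)⁻¹).congr
      (.of_forall fun z => mul_left_comm _ _ _)).ofReal.const_mul (β m)
  calc ∫ z, paModel M β z * star z * (ρ z : ℂ)
      = ∫ z, ∑ m ∈ Finset.range (M + 1), β m * ((‖z‖ ^ (2 * (m + 1)) * ρ z : ℝ) : ℂ) := by
        simp_rw [paModel_mul_star, Finset.sum_mul, Complex.ofReal_mul, mul_assoc]
    _ = ∑ m ∈ Finset.range (M + 1), β m * ((m + 1).factorial * P ^ (m + 1) : ℝ) := by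
        rw [integral_finsetSum _ fun m _ => hintegrable m]
        simp_rw [integral_const_mul, integral_complex_ofReal, ρ,
          Complex.integral_norm_pow_mul_gaussianDensity _ hP]
    _ = (P : ℂ) * avgGain M β P := by
        rw [avgGain, Finset.mul_sum]
        refine Finset.sum_congr rfl fun m _ => ?_
        push_cast
        ring
end

section
/- (Proposition 2, zero-mean part.) Let C be an N×N Hermitian positive definite complex matrix and set P_k = Re(C_{kk}). Then for every index k, ∫_{ℂ^N} ( f(u_k) − ḡ(P_k) · u_k ) · p_C(u) du = 0; that is, the nonlinear distortion vector d with entries d_k = f(u_k) − ḡ(P_k) u_k has zero mean when u is a circularly symmetric complex Gaussian vector with covariance C. -/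
open MeasureTheory Matrix ComplexOrder

/-- The circularly symmetric complex Gaussian density on `ℂ^N` with covariance `C`:
`p_C(u) = π^{-N} (det C)⁻¹ exp(-Re(uᴴ C⁻¹ u))`. -/
noncomputable def gaussDensity {N : ℕ} (C : Matrix (Fin N) (Fin N) ℂ)
    (u : Fin N → ℂ) : ℝ :=
  (Real.pi ^ N)⁻¹ * (C.det.re)⁻¹ *
    Real.exp (-(dotProduct (star u) (C⁻¹.mulVec u)).re)

theorem Function.Odd.integral_eq_zero {G E : Type*} [MeasurableSpace G] [AddGroup G]
    [MeasurableNeg G] [NormedAddCommGroup E] [NormedSpace ℝ E] {f : G → E} (hf : f.Odd)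
    (μ : Measure G) [μ.IsNegInvariant] : ∫ x, f x ∂μ = 0 := by
  have h := integral_neg_eq_self f μ
  rw [funext hf, integral_neg] at h
  have : IsAddTorsionFree E := .of_isTorsionFree ℝ E
  exact neg_eq_self.mp h

theorem paModel_odd (M : ℕ) (β : ℕ → ℂ) : (paModel M β).Odd := fun z => by
  simp [paModel, Finset.sum_neg_distrib]

theorem gaussDensity_even {N : ℕ} (C : Matrix (Fin N) (Fin N) ℂ) : (gaussDensity C).Even :=
  fun u => by simp [gaussDensity, mulVec_neg]

theorem distortion_zero_mean_general (M : ℕ) (β : ℕ → ℂ) (N : ℕ)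
    (C : Matrix (Fin N) (Fin N) ℂ) (k : Fin N) :
    ∫ u : Fin N → ℂ,
        (paModel M β (u k) - avgGain M β (C k k).re * u k) *
          ((gaussDensity C u : ℝ) : ℂ) = 0 := by
  refine Function.Odd.integral_eq_zero (fun u => ?_) volume
  simp only [Pi.neg_apply, (paModel_odd M β).eq, (gaussDensity_even C).eq]
  ring

/-- Proposition 2 (zero-mean part): the nonlinear distortion vector with entries
`d_k = f(u_k) - ḡ(P_k) u_k`, `P_k = Re(C_{kk})`, has zero mean when `u` is a
circularly symmetric complex Gaussian with Hermitian positive definite covariance `C`. -/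
theorem distortion_zero_mean (M : ℕ) (β : ℕ → ℂ) (N : ℕ)
    (C : Matrix (Fin N) (Fin N) ℂ) (hC : C.PosDef) (k : Fin N) :
    ∫ u : Fin N → ℂ,
        (paModel M β (u k) - avgGain M β (C k k).re * u k) *
          ((gaussDensity C u : ℝ) : ℂ) = 0 :=
  distortion_zero_mean_general M β N C k
end

section
/- (Lemma 3: Loewner monotonicity of the log-det SINR functional.) Let Z and Z' be N×N Hermitian positive semidefinite complex matrices such that Z' − Z is positive semidefinite, and let α₁, α₂ ≥ 0 be reals. Then det( I + α₁ (I + α₂ Z)⁻¹ Z ) and det( I + α₁ (I + α₂ Z')⁻¹ Z' ) are real numbers and Re( det( I + α₁ (I + α₂ Z)⁻¹ Z ) ) ≤ Re( det( I + α₁ (I + α₂ Z')⁻¹ Z' ) ); equivalently, the functional f(Z) = log₂ det( I + α₁ (I + α₂ Z)⁻¹ Z ) is monotone nondecreasing with respect to the Loewner (positive semidefinite) order. -/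
/-!
For `α₂ > 0` one has `(I + α₂ Z)⁻¹ Z = α₂⁻¹ (I - (I + α₂ Z)⁻¹)`, so the operator antitonicity of
the inverse makes `Z ↦ (I + α₂ Z)⁻¹ Z` Loewner monotone on the positive semidefinite cone (and
nonnegative there). The determinant is Loewner monotone as well: for `0 < A ≤ B`,
`det B = det A · det (A^{-1/2} B A^{-1/2})`, and the last matrix is `≥ I`, so its eigenvalues are
`≥ 1`. The comparison of the two determinants takes place in the partial order of `ℂ`, where
`z ≤ w` already says that `z.im = w.im`.
-/

open Matrix ComplexOrder
open scoped MatrixOrder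

namespace Matrix

variable {n : Type*} [Fintype n] [DecidableEq n]

section Det

variable {𝕜 : Type*} [RCLike 𝕜]

theorem one_le_det_of_one_le {M : Matrix n n 𝕜} (h : 1 ≤ M) : 1 ≤ M.det := by
  have hM : M.IsHermitian := by
    simpa using (le_iff.1 h).isHermitian.add (isHermitian_one (α := 𝕜))
  have hev (i : n) : 1 ≤ hM.eigenvalues i :=
    (algebraMap_le_iff_le_spectrum (r := (1 : ℝ)) hM.isSelfAdjoint).1 (by simpa using h) _
      (hM.eigenvalues_mem_spectrum_real i)
  rw [hM.det_eq_prod_eigenvalues, ← RCLike.ofReal_prod]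
  exact_mod_cast Finset.one_le_prod fun i _ => hev i

theorem det_le_det_of_le {A B : Matrix n n 𝕜} (hA : 0 ≤ A) (h : A ≤ B) : A.det ≤ B.det := by
  by_cases hdet : A.det = 0
  · exact hdet ▸ (hA.trans h).posSemidef.det_nonneg
  set S := CFC.sqrt A
  have hSS : S * S = A := CFC.sqrt_mul_sqrt_self A hA
  have hS : star S⁻¹ = S⁻¹ := by
    rw [star_eq_conjTranspose, conjTranspose_nonsing_inv, ← star_eq_conjTranspose,
      (CFC.sqrt_nonneg A).isSelfAdjoint.star_eq]
  have hSu : IsUnit S.det := by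
    rw [← hSS, det_mul] at hdet
    exact isUnit_iff_ne_zero.2 (left_ne_zero_of_mul hdet)
  have hSBS : S * (S⁻¹ * B * S⁻¹) * S = B := by
    simp only [← mul_assoc, mul_nonsing_inv _ hSu, one_mul, nonsing_inv_mul_cancel_right _ _ hSu]
  have h1 : 1 ≤ S⁻¹ * B * S⁻¹ := by
    simpa [hS, ← hSS, ← mul_assoc, nonsing_inv_mul _ hSu, mul_nonsing_inv _ hSu]
      using star_left_conjugate_le_conjugate h S⁻¹
  calc A.det ≤ A.det * (S⁻¹ * B * S⁻¹).det :=
        le_mul_of_one_le_right hA.posSemidef.det_nonneg (one_le_det_of_one_le h1)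
    _ = (S * (S⁻¹ * B * S⁻¹) * S).det := by
      rw [det_mul (S * _), det_mul S, ← hSS, det_mul]; ring
    _ = B.det := by rw [hSBS]

end Det

theorem inv_one_add_smul_mul_self {K : Type*} [Field K] {Z : Matrix n n K} {c : K} (hc : c ≠ 0)
    (hu : IsUnit (1 + c • Z).det) : (1 + c • Z)⁻¹ * Z = c⁻¹ • (1 - (1 + c • Z)⁻¹) := by
  have h : c • ((1 + c • Z)⁻¹ * Z) = 1 - (1 + c • Z)⁻¹ := by
    rw [eq_sub_iff_add_eq, ← mul_smul_comm, add_comm, ← Matrix.mul_one (1 + c • Z)⁻¹,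
      Matrix.mul_assoc, Matrix.one_mul, ← Matrix.mul_add, nonsing_inv_mul _ hu]
  rw [← h, smul_smul, inv_mul_cancel₀ hc, one_smul]

open scoped Matrix.Norms.L2Operator in
theorem monotoneOn_inv_one_add_smul_mul {c : ℂ} (hc : 0 ≤ c) :
    MonotoneOn (fun Z : Matrix n n ℂ => (1 + c • Z)⁻¹ * Z) {Z | 0 ≤ Z} := by
  intro Z (hZ : 0 ≤ Z) Z' _ h
  rcases eq_or_ne c 0 with rfl | hc0
  · simpa using h
  have hpos : IsStrictlyPositive (1 + c • Z) :=
    isStrictlyPositive_one.add_nonneg (smul_nonneg hc hZ)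
  have hle : 1 + c • Z ≤ 1 + c • Z' := add_le_add_right (smul_le_smul_of_nonneg_left h hc) 1
  have hunit (W : Matrix n n ℂ) (hW : 1 + c • Z ≤ 1 + c • W) : IsUnit (1 + c • W).det :=
    (isUnit_iff_isUnit_det _).1 (hpos.of_le hW).isUnit
  simp only [inv_one_add_smul_mul_self hc0 (hunit Z le_rfl),
    inv_one_add_smul_mul_self hc0 (hunit Z' hle)]
  have hinv : (1 + c • Z')⁻¹ ≤ (1 + c • Z)⁻¹ := by
    simpa [nonsing_inv_eq_ringInverse] using CStarAlgebra.ringInverse_le_ringInverse hle hpos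
  exact smul_le_smul_of_nonneg_left (sub_le_sub_left hinv 1) (inv_nonneg.2 hc)

theorem inv_one_add_smul_mul_nonneg {c : ℂ} (hc : 0 ≤ c) {Z : Matrix n n ℂ} (hZ : 0 ≤ Z) :
    0 ≤ (1 + c • Z)⁻¹ * Z := by
  simpa using monotoneOn_inv_one_add_smul_mul hc (le_refl (0 : Matrix n n ℂ)) hZ hZ

end Matrix

theorem det_sinr_loewner_monotone_general (N : ℕ) (Z Z' : Matrix (Fin N) (Fin N) ℂ)
    (hZ : Z.PosSemidef) (hle : (Z' - Z).PosSemidef)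
    (α₁ α₂ : ℝ) (hα₁ : 0 ≤ α₁) (hα₂ : 0 ≤ α₂) :
    (Matrix.det (1 + (α₁ : ℂ) • ((1 + (α₂ : ℂ) • Z)⁻¹ * Z))).im = 0 ∧
    (Matrix.det (1 + (α₁ : ℂ) • ((1 + (α₂ : ℂ) • Z')⁻¹ * Z'))).im = 0 ∧
    (Matrix.det (1 + (α₁ : ℂ) • ((1 + (α₂ : ℂ) • Z)⁻¹ * Z))).re ≤
      (Matrix.det (1 + (α₁ : ℂ) • ((1 + (α₂ : ℂ) • Z')⁻¹ * Z'))).re := by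
  have hα₁' : (0 : ℂ) ≤ α₁ := Complex.zero_le_real.2 hα₁
  have hα₂' : (0 : ℂ) ≤ α₂ := Complex.zero_le_real.2 hα₂
  have hX : 0 ≤ (α₁ : ℂ) • ((1 + (α₂ : ℂ) • Z)⁻¹ * Z) :=
    smul_nonneg hα₁' (inv_one_add_smul_mul_nonneg hα₂' hZ.nonneg)
  have hXX' : (α₁ : ℂ) • ((1 + (α₂ : ℂ) • Z)⁻¹ * Z) ≤ (α₁ : ℂ) • ((1 + (α₂ : ℂ) • Z')⁻¹ * Z') :=
    smul_le_smul_of_nonneg_left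
      (monotoneOn_inv_one_add_smul_mul hα₂' hZ.nonneg (hZ.nonneg.trans hle) hle) hα₁'
  have hP : 0 ≤ 1 + (α₁ : ℂ) • ((1 + (α₂ : ℂ) • Z)⁻¹ * Z) := add_nonneg zero_le_one hX
  have hdet₀ : 0 ≤ (1 + (α₁ : ℂ) • ((1 + (α₂ : ℂ) • Z)⁻¹ * Z)).det := hP.posSemidef.det_nonneg
  have hdet := det_le_det_of_le hP (add_le_add_right hXX' 1)
  rw [Complex.le_def] at hdet₀ hdet
  exact ⟨hdet₀.2.symm, hdet.2 ▸ hdet₀.2.symm, hdet.1⟩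

/-- Lemma 3: Loewner monotonicity of the log-det SINR functional. If `Z, Z'` are
Hermitian positive semidefinite with `Z' - Z` positive semidefinite and
`α₁, α₂ ≥ 0`, then both `det(I + α₁ (I + α₂ Z)⁻¹ Z)` and
`det(I + α₁ (I + α₂ Z')⁻¹ Z')` are real numbers, and the former is at most the
latter. -/
theorem det_sinr_loewner_monotone (N : ℕ) (Z Z' : Matrix (Fin N) (Fin N) ℂ)
    (hZ : Z.PosSemidef) (hZ' : Z'.PosSemidef) (hle : (Z' - Z).PosSemidef)
    (α₁ α₂ : ℝ) (hα₁ : 0 ≤ α₁) (hα₂ : 0 ≤ α₂) :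
    (Matrix.det (1 + (α₁ : ℂ) • ((1 + (α₂ : ℂ) • Z)⁻¹ * Z))).im = 0 ∧
    (Matrix.det (1 + (α₁ : ℂ) • ((1 + (α₂ : ℂ) • Z')⁻¹ * Z'))).im = 0 ∧
    (Matrix.det (1 + (α₁ : ℂ) • ((1 + (α₂ : ℂ) • Z)⁻¹ * Z))).re ≤
      (Matrix.det (1 + (α₁ : ℂ) • ((1 + (α₂ : ℂ) • Z')⁻¹ * Z'))).re :=
  det_sinr_loewner_monotone_general N Z Z' hZ hle α₁ α₂ hα₁ hα₂
end

section
/- (Lemma 4: Rayleigh-quotient lower bound on the log-det SINR functional.) Let Z be an N×N Hermitian positive semidefinite complex matrix, let α₁, α₂ ≥ 0 be reals, and let r ∈ ℂ^N be a unit vector (rᴴ r = 1). Set t = Re(rᴴ Z r), which is a nonnegative real. Then 1 + α₁ t / (α₂ t + 1) ≤ Re( det( I + α₁ (I + α₂ Z)⁻¹ Z ) ); equivalently, log₂( 1 + α₁ rᴴZr / (α₂ rᴴZr + 1) ) ≤ log₂ det( I + α₁ (I + α₂ Z)⁻¹ Z ). -/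
/-!
By the functional calculus, `1 + α₁ (1 + α₂ Z)⁻¹ Z = f(Z)` for `f x = 1 + α₁ x / (α₂ x + 1)`, so
its determinant is `∏ᵢ f(λᵢ)` over the eigenvalues `λᵢ ≥ 0` of `Z`, and every factor is `≥ 1`.
The Rayleigh quotient `rᴴ Z r` of a unit vector is at most some eigenvalue `λⱼ` (as `Z ≤ λ_max`),
and `f` is monotone on `[0, ∞)`, hence `f(rᴴ Z r) ≤ f(λⱼ) ≤ ∏ᵢ f(λᵢ)`.
-/

open Matrix ComplexOrder

namespace Matrix

variable {n 𝕜 : Type*} [RCLike 𝕜] [Fintype n] [DecidableEq n] {A : Matrix n n 𝕜}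

lemma IsHermitian.det_cfc (hA : A.IsHermitian) (f : ℝ → ℝ) :
    (cfc f A).det = ((∏ i, f (hA.eigenvalues i) : ℝ) : 𝕜) := by
  simp [hA.cfc_eq, IsHermitian.cfc, -Unitary.conjStarAlgAut_apply]

open scoped MatrixOrder in
lemma IsHermitian.exists_re_dotProduct_mulVec_le_eigenvalue (hA : A.IsHermitian) {x : n → 𝕜}
    (hx : star x ⬝ᵥ x = 1) : ∃ i, RCLike.re (star x ⬝ᵥ (A *ᵥ x)) ≤ hA.eigenvalues i := by
  have : Nonempty n := by
    by_contra h
    simp [not_nonempty_iff.mp h] at hx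
  obtain ⟨j, hj⟩ := Finite.exists_max hA.eigenvalues
  have hle : A ≤ algebraMap ℝ _ (hA.eigenvalues j) :=
    le_algebraMap_of_spectrum_le <| by
      rw [hA.spectrum_real_eq_range_eigenvalues]
      rintro _ ⟨i, rfl⟩
      exact hj i
  have hnonneg := (le_iff.mp hle).dotProduct_mulVec_nonneg x
  rw [Algebra.algebraMap_eq_smul_one, sub_mulVec, dotProduct_sub, smul_mulVec, one_mulVec,
    dotProduct_smul, hx, RCLike.nonneg_iff] at hnonneg
  exact ⟨j, by simpa [RCLike.smul_re] using hnonneg.1⟩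

lemma IsHermitian.one_add_smul_inv_mul_eq_cfc (hA : A.IsHermitian) (a b : ℝ)
    (hb : ∀ i, b * hA.eigenvalues i + 1 ≠ 0) :
    1 + a • ((1 + b • A)⁻¹ * A) = cfc (fun x ↦ 1 + a * x / (b * x + 1)) A := by
  have hb' : ∀ x ∈ spectrum ℝ A, b * x + 1 ≠ 0 := by
    rw [hA.spectrum_real_eq_range_eigenvalues]
    rintro _ ⟨i, rfl⟩
    exact hb i
  have hcont (f : ℝ → ℝ) : ContinuousOn f (spectrum ℝ A) := finite_real_spectrum.continuousOn f
  have hinv : (1 + b • A)⁻¹ = cfc (fun x ↦ (b * x + 1)⁻¹) A := by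
    rw [cfc_inv _ _ hb' (hcont _), cfc_add_const _ _ _ (hcont _), cfc_const_mul_id b A, map_one,
      add_comm, nonsing_inv_eq_ringInverse]
  calc 1 + a • ((1 + b • A)⁻¹ * A)
      = cfc (fun x ↦ 1 + a * ((b * x + 1)⁻¹ * x)) A := by
        rw [cfc_const_add _ _ _ (hcont _), cfc_const_mul _ _ _ (hcont _),
          cfc_mul _ _ _ (hcont _) (hcont _), cfc_id' ℝ A, hinv, map_one]
    _ = cfc (fun x ↦ 1 + a * x / (b * x + 1)) A := by
        congr 1
        ext x
        ring

end Matrix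

lemma monotoneOn_one_add_mul_div {a b : ℝ} (ha : 0 ≤ a) (hb : 0 ≤ b) :
    MonotoneOn (fun x ↦ 1 + a * x / (b * x + 1)) (Set.Ici 0) := by
  intro x (hx : 0 ≤ x) y (hy : 0 ≤ y) hxy
  simp only [add_le_add_iff_left]
  rw [div_le_div_iff₀ (by positivity) (by positivity)]
  nlinarith [mul_le_mul_of_nonneg_left hxy ha]

lemma one_le_one_add_mul_div {a b x : ℝ} (ha : 0 ≤ a) (hb : 0 ≤ b) (hx : 0 ≤ x) :
    1 ≤ 1 + a * x / (b * x + 1) :=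
  le_add_of_nonneg_right (by positivity)

/-- Lemma 4: Rayleigh-quotient lower bound on the log-det SINR functional. For
`Z` Hermitian positive semidefinite, `α₁, α₂ ≥ 0` and a unit vector `r`
(`rᴴ r = 1`), letting `t = Re(rᴴ Z r) ≥ 0`,
`1 + α₁ t / (α₂ t + 1) ≤ Re(det(I + α₁ (I + α₂ Z)⁻¹ Z))`. -/
theorem det_sinr_rayleigh_lower_bound (N : ℕ) (Z : Matrix (Fin N) (Fin N) ℂ)
    (hZ : Z.PosSemidef) (α₁ α₂ : ℝ) (hα₁ : 0 ≤ α₁) (hα₂ : 0 ≤ α₂)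
    (r : Fin N → ℂ) (hr : dotProduct (star r) r = 1) :
    1 + α₁ * (dotProduct (star r) (Z.mulVec r)).re /
        (α₂ * (dotProduct (star r) (Z.mulVec r)).re + 1) ≤
      (Matrix.det (1 + (α₁ : ℂ) • ((1 + (α₂ : ℂ) • Z)⁻¹ * Z))).re := by
  set f : ℝ → ℝ := fun x ↦ 1 + α₁ * x / (α₂ * x + 1)
  set μ := hZ.1.eigenvalues
  have hμ : ∀ i, 0 ≤ μ i := hZ.eigenvalues_nonneg
  have hf : ∀ i, 1 ≤ f (μ i) := fun i ↦ one_le_one_add_mul_div hα₁ hα₂ (hμ i)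
  have ht : 0 ≤ (star r ⬝ᵥ Z *ᵥ r).re := (Complex.nonneg_iff.mp (hZ.dotProduct_mulVec_nonneg r)).1
  obtain ⟨j, htj⟩ := hZ.1.exists_re_dotProduct_mulVec_le_eigenvalue hr
  rw [Complex.coe_smul, Complex.coe_smul,
    hZ.1.one_add_smul_inv_mul_eq_cfc α₁ α₂ fun i ↦ by nlinarith [hμ i], hZ.1.det_cfc]
  calc f (star r ⬝ᵥ Z *ᵥ r).re ≤ f (μ j) := monotoneOn_one_add_mul_div hα₁ hα₂ ht (hμ j) htj
    _ = ∏ i ∈ {j}, f (μ i) := (Finset.prod_singleton _ _).symm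
    _ ≤ ∏ i, f (μ i) :=
      Finset.prod_le_prod_of_subset_of_one_le (Finset.subset_univ _)
        (fun i _ ↦ zero_le_one.trans (hf i)) fun i _ _ ↦ hf i
    _ = ((∏ i, f (μ i) : ℝ) : ℂ).re := (RCLike.ofReal_re (K := ℂ) _).symm
end

section
/- (Lemma 4, equality case.) Let r ∈ ℂ^N be a unit vector (rᴴ r = 1), let λ ≥ 0 be real, let Z = λ · r rᴴ (the rank-one positive semidefinite matrix with entries λ r_i conj(r_j)), and let α₁, α₂ ≥ 0 be reals. Then det( I + α₁ (I + α₂ Z)⁻¹ Z ) = 1 + α₁ λ / (α₂ λ + 1), and Re(rᴴ Z r) = λ, so the Rayleigh-quotient lower bound holds with equality: 1 + α₁ Re(rᴴZr)/(α₂ Re(rᴴZr) + 1) = Re( det( I + α₁ (I + α₂ Z)⁻¹ Z ) ). -/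
/-! `Z = λ P` with `P = r rᴴ` an idempotent of trace one, so
`(I + α₂ Z)⁻¹ Z = λ / (1 + α₂ λ) • P` and the matrix determinant lemma `det (I + c P) = 1 + c`
gives the determinant; the Rayleigh quotient is `λ (rᴴ r)² = λ`. -/

open Matrix ComplexOrder

namespace Matrix

variable {n : Type*} [Fintype n]

theorem det_one_add_vecMulVec [DecidableEq n] {R : Type*} [CommRing R] (u v : n → R) :
    det (1 + vecMulVec u v) = 1 + v ⬝ᵥ u := by
  rw [vecMulVec_eq Unit, det_one_add_replicateCol_mul_replicateRow]

theorem isIdempotentElem_vecMulVec {R : Type*} [CommSemiring R] {u v : n → R}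
    (h : v ⬝ᵥ u = 1) : IsIdempotentElem (vecMulVec u v) := by
  rw [IsIdempotentElem, vecMulVec_mul_vecMulVec, h, one_smul]

theorem dotProduct_vecMulVec_mulVec {R : Type*} [CommSemiring R] (w u v x : n → R) :
    w ⬝ᵥ vecMulVec u v *ᵥ x = (w ⬝ᵥ u) * (v ⬝ᵥ x) := by
  rw [vecMulVec_mulVec, op_smul_eq_smul, dotProduct_smul, smul_eq_mul, mul_comm]

variable [DecidableEq n] {K : Type*} [Field K] {P : Matrix n n K}

theorem inv_one_add_smul_of_isIdempotentElem (hP : IsIdempotentElem P) {a : K}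
    (ha : 1 + a ≠ 0) : (1 + a • P)⁻¹ = 1 - (a / (1 + a)) • P := by
  refine inv_eq_left_inv ?_
  have hcoef : a - (a / (1 + a) + a / (1 + a) * a) = 0 := by
    field_simp
    ring
  rw [sub_mul, one_mul, mul_add, mul_one, smul_mul_smul_comm, hP.eq, add_sub_assoc, ← add_smul,
    ← sub_smul, hcoef, zero_smul, add_zero]

theorem inv_one_add_smul_mul_of_isIdempotentElem (hP : IsIdempotentElem P) {a : K}
    (ha : 1 + a ≠ 0) : (1 + a • P)⁻¹ * P = (1 + a)⁻¹ • P := by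
  rw [inv_one_add_smul_of_isIdempotentElem hP ha, sub_mul, one_mul, smul_mul_assoc, hP.eq]
  nth_rw 1 [← one_smul K P]
  rw [← sub_smul]
  congr 1
  field_simp
  ring

end Matrix

theorem det_sinr_rayleigh_equality_general (N : ℕ) (r : Fin N → ℂ)
    (hr : dotProduct (star r) r = 1) (lam : ℝ) (hlam : 0 ≤ lam)
    (α₁ α₂ : ℝ) (hα₂ : 0 ≤ α₂)
    (Z : Matrix (Fin N) (Fin N) ℂ)
    (hZ : Z = (lam : ℂ) • Matrix.vecMulVec r (star r)) :
    Matrix.det (1 + (α₁ : ℂ) • ((1 + (α₂ : ℂ) • Z)⁻¹ * Z)) =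
      ((1 + α₁ * lam / (α₂ * lam + 1) : ℝ) : ℂ) ∧
    (dotProduct (star r) (Z.mulVec r)).re = lam ∧
    1 + α₁ * (dotProduct (star r) (Z.mulVec r)).re /
        (α₂ * (dotProduct (star r) (Z.mulVec r)).re + 1) =
      (Matrix.det (1 + (α₁ : ℂ) • ((1 + (α₂ : ℂ) • Z)⁻¹ * Z))).re := by
  have hden : (1 : ℂ) + α₂ * lam ≠ 0 := by exact_mod_cast (by positivity : (1 : ℝ) + α₂ * lam ≠ 0)
  have hdet : det (1 + (α₁ : ℂ) • ((1 + (α₂ : ℂ) • Z)⁻¹ * Z)) =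
      ((1 + α₁ * lam / (α₂ * lam + 1) : ℝ) : ℂ) := by
    rw [hZ, smul_smul, Matrix.mul_smul, inv_one_add_smul_mul_of_isIdempotentElem
      (isIdempotentElem_vecMulVec hr) hden, smul_smul, smul_smul, ← smul_vecMulVec,
      det_one_add_vecMulVec, dotProduct_smul, hr]
    push_cast
    ring
  have hray : (star r ⬝ᵥ Z *ᵥ r).re = lam := by
    rw [hZ, smul_mulVec, dotProduct_smul, dotProduct_vecMulVec_mulVec, hr, smul_eq_mul, mul_one,
      mul_one, Complex.ofReal_re]
  refine ⟨hdet, hray, ?_⟩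
  rw [hray, hdet, Complex.ofReal_re]

/-- Lemma 4, equality case: for a unit vector `r`, `λ ≥ 0`, the rank-one matrix
`Z = λ r rᴴ` and `α₁, α₂ ≥ 0`, one has
`det(I + α₁ (I + α₂ Z)⁻¹ Z) = 1 + α₁ λ / (α₂ λ + 1)` and `Re(rᴴ Z r) = λ`, so the
Rayleigh-quotient lower bound holds with equality. -/
theorem det_sinr_rayleigh_equality (N : ℕ) (r : Fin N → ℂ)
    (hr : dotProduct (star r) r = 1) (lam : ℝ) (hlam : 0 ≤ lam)
    (α₁ α₂ : ℝ) (hα₁ : 0 ≤ α₁) (hα₂ : 0 ≤ α₂)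
    (Z : Matrix (Fin N) (Fin N) ℂ)
    (hZ : Z = (lam : ℂ) • Matrix.vecMulVec r (star r)) :
    Matrix.det (1 + (α₁ : ℂ) • ((1 + (α₂ : ℂ) • Z)⁻¹ * Z)) =
      ((1 + α₁ * lam / (α₂ * lam + 1) : ℝ) : ℂ) ∧
    (dotProduct (star r) (Z.mulVec r)).re = lam ∧
    1 + α₁ * (dotProduct (star r) (Z.mulVec r)).re /
        (α₂ * (dotProduct (star r) (Z.mulVec r)).re + 1) =
      (Matrix.det (1 + (α₁ : ℂ) • ((1 + (α₂ : ℂ) • Z)⁻¹ * Z))).re :=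
  det_sinr_rayleigh_equality_general N r hr lam hlam α₁ α₂ hα₂ Z hZ
end
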